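/- arXiv:2505.12954 — 4 statements merged into one kernel-verified Lean document; each statement's English description precedes it below -/
import Mathlib

section
/- In the graph G_k^{μ,υ}(X), a set S of k vertices forms a k-clique if and only if S contains exactly one vertex u_i from U, exactly one vertex y_j from Y, exactly one vertex from each W_p (1 ≤ p ≤ k−2), and μ_i = 1, υ_j = 1, X_{i,j} = 1. -/
/-!
Sort the vertices by part: `u_i ↦ 0`, `y_j ↦ 1`, `w_{p,j} ↦ p + 2`. Adjacent vertices lie in
different parts, so this labelling is injective on a clique, and a `k`-clique meets each of the
`k` parts exactly once. Such a transversal is a clique exactly when `μ_i`, `υ_j` and `X_{i,j}`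
hold, because the vertices of `W` are adjacent to each other unconditionally.
-/

/-- The gadget graph `G_k^{μ,υ}(X)` with vertex parts `U`, `Y`, `W_1, …, W_{k−2}`, each of
size `m = n/3`. Vertices: `inl i = u_i`, `inr (inl j) = y_j`, `inr (inr (p, j)) = w_{p,j}`. -/
def gadget (k m : ℕ) (μ υ : Fin m → Bool) (X : Fin m → Fin m → Bool) :
    SimpleGraph (Fin m ⊕ Fin m ⊕ Fin (k - 2) × Fin m) where
  Adj a b :=
    match a, b with
    | .inl i, .inr (.inl j) => X i j = true
    | .inr (.inl j), .inl i => X i j = true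
    | .inl i, .inr (.inr _) => μ i = true
    | .inr (.inr _), .inl i => μ i = true
    | .inr (.inl i), .inr (.inr _) => υ i = true
    | .inr (.inr _), .inr (.inl i) => υ i = true
    | .inr (.inr (p, _)), .inr (.inr (q, _)) => p ≠ q
    | _, _ => False
  symm := by
    constructor
    rintro (i | j | ⟨p, w⟩) (i' | j' | ⟨p', w'⟩) h <;> simp_all <;> exact Ne.symm h
  loopless := by
    constructor
    rintro (i | j | ⟨p, w⟩) h <;> simp_all

open Finset

theorem SimpleGraph.IsNClique.image_eq {V α : Type*} [DecidableEq α] {G : SimpleGraph V}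
    {n : ℕ} {S : Finset V} {f : V → α} {T : Finset α} (hS : G.IsNClique n S)
    (hf : ∀ ⦃a b⦄, G.Adj a b → f a ≠ f b) (hST : ∀ a ∈ S, f a ∈ T) (hT : #T ≤ n) :
    S.image f = T := by
  have hinj : Set.InjOn f S := fun a ha b hb hab =>
    by_contra fun hne => hf (hS.isClique ha hb hne) hab
  refine eq_of_subset_of_card_le (image_subset_iff.2 hST) ?_
  rw [card_image_of_injOn hinj, hS.card_eq]
  exact hT

namespace gadget

variable {k m : ℕ} {μ υ : Fin m → Bool} {X : Fin m → Fin m → Bool}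

def part : Fin m ⊕ Fin m ⊕ Fin (k - 2) × Fin m → ℕ
  | .inl _ => 0
  | .inr (.inl _) => 1
  | .inr (.inr (p, _)) => p + 2

theorem part_lt (hk : 2 ≤ k) : ∀ a : Fin m ⊕ Fin m ⊕ Fin (k - 2) × Fin m, part a < k
  | .inl _ | .inr (.inl _) => by simp only [part]; omega
  | .inr (.inr (p, _)) => by simp only [part]; omega

theorem part_ne_of_adj ⦃a b : Fin m ⊕ Fin m ⊕ Fin (k - 2) × Fin m⦄
    (h : (gadget k m μ υ X).Adj a b) : part a ≠ part b := by
  rcases a with i | j | ⟨p, w⟩ <;> rcases b with i' | j' | ⟨p', w'⟩ <;>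
    simp_all [gadget, part, Fin.val_inj]

def transversal (i j : Fin m) (g : Fin (k - 2) → Fin m) :
    Finset (Fin m ⊕ Fin m ⊕ Fin (k - 2) × Fin m) :=
  insert (Sum.inl i) (insert (Sum.inr (Sum.inl j))
    (image (fun p => Sum.inr (Sum.inr (p, g p))) univ))

theorem card_transversal (hk : 2 ≤ k) (i j : Fin m) (g : Fin (k - 2) → Fin m) :
    #(transversal i j g) = k := by
  have hw : Function.Injective fun p : Fin (k - 2) =>
      (Sum.inr (Sum.inr (p, g p)) : Fin m ⊕ Fin m ⊕ Fin (k - 2) × Fin m) :=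
    fun p q h => by simp_all
  rw [transversal, card_insert_of_notMem (by simp), card_insert_of_notMem (by simp),
    card_image_of_injective _ hw, card_univ, Fintype.card_fin]
  omega

theorem isClique_transversal_iff (hk : 3 ≤ k) {i j : Fin m} {g : Fin (k - 2) → Fin m} :
    (gadget k m μ υ X).IsClique (transversal i j g : Set _) ↔
      μ i = true ∧ υ j = true ∧ X i j = true := by
  constructor
  · intro h
    let w : Fin m ⊕ Fin m ⊕ Fin (k - 2) × Fin m := .inr (.inr (⟨0, by omega⟩, g ⟨0, by omega⟩))
    have hu : Sum.inl i ∈ transversal i j g := by simp [transversal]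
    have hy : Sum.inr (Sum.inl j) ∈ transversal i j g := by simp [transversal]
    have hw : w ∈ transversal i j g := by simp [w, transversal]
    exact ⟨h hu hw (by simp [w]), h hy hw (by simp [w]), h hu hy (by simp)⟩
  · rintro ⟨hμ, hυ, hX⟩ a ha b hb hne
    simp only [transversal, coe_insert, coe_image, coe_univ, Set.image_univ, Set.mem_insert_iff,
      Set.mem_range] at ha hb
    rcases ha with rfl | rfl | ⟨p, rfl⟩ <;> rcases hb with rfl | rfl | ⟨q, rfl⟩ <;>
      simp_all [gadget]

theorem exists_transversal_subset_of_isNClique (hk : 2 ≤ k)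
    {S : Finset (Fin m ⊕ Fin m ⊕ Fin (k - 2) × Fin m)} (hS : (gadget k m μ υ X).IsNClique k S) :
    ∃ i j g, transversal i j g ⊆ S := by
  have hmem : ∀ t < k, ∃ a ∈ S, part a = t := fun t ht => by
    have himage : S.image part = range k :=
      hS.image_eq part_ne_of_adj (fun a _ => mem_range.2 (part_lt hk a)) (by simp)
    exact mem_image.1 (himage ▸ mem_range.2 ht)
  obtain ⟨i, hi⟩ : ∃ i, Sum.inl i ∈ S := by
    obtain ⟨i | j | ⟨p, w⟩, ha, h⟩ := hmem 0 (by omega) <;> simp [part] at h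
    exact ⟨i, ha⟩
  obtain ⟨j, hj⟩ : ∃ j, Sum.inr (Sum.inl j) ∈ S := by
    obtain ⟨i | j | ⟨p, w⟩, ha, h⟩ := hmem 1 (by omega) <;> simp [part] at h
    exact ⟨j, ha⟩
  have hW : ∀ p : Fin (k - 2), ∃ w, Sum.inr (Sum.inr (p, w)) ∈ S := fun p => by
    obtain ⟨i | j | ⟨q, w⟩, ha, h⟩ := hmem (p + 2) (by omega) <;> simp [part] at h
    exact ⟨w, Fin.ext h ▸ ha⟩
  choose g hg using hW
  refine ⟨i, j, g, insert_subset hi (insert_subset hj ?_)⟩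
  simpa [image_subset_iff] using hg

end gadget

/-- A set `S` of `k` vertices of `G_k^{μ,υ}(X)` forms a `k`-clique if and only if it
consists of exactly one `u_i`, exactly one `y_j`, and exactly one vertex of each `W_p`,
with `μ_i = 1`, `υ_j = 1` and `X_{i,j} = 1`. -/
theorem stmt9 (k m : ℕ) (hk : 3 ≤ k) (μ υ : Fin m → Bool) (X : Fin m → Fin m → Bool)
    (S : Finset (Fin m ⊕ Fin m ⊕ Fin (k - 2) × Fin m)) :
    (gadget k m μ υ X).IsNClique k S ↔
      ∃ (i j : Fin m) (g : Fin (k - 2) → Fin m),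
        μ i = true ∧ υ j = true ∧ X i j = true ∧
        S = insert (Sum.inl i) (insert (Sum.inr (Sum.inl j))
              (Finset.image (fun p => Sum.inr (Sum.inr (p, g p))) Finset.univ)) := by
  constructor
  · intro hS
    obtain ⟨i, j, g, hsub⟩ := gadget.exists_transversal_subset_of_isNClique (by omega) hS
    obtain rfl : gadget.transversal i j g = S :=
      eq_of_subset_of_card_le hsub (by rw [gadget.card_transversal (by omega), hS.card_eq])
    obtain ⟨hμ, hυ, hX⟩ := (gadget.isClique_transversal_iff hk).1 hS.isClique
    exact ⟨i, j, g, hμ, hυ, hX, rfl⟩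
  · rintro ⟨i, j, g, hμ, hυ, hX, rfl⟩
    exact ⟨(gadget.isClique_transversal_iff hk).2 ⟨hμ, hυ, hX⟩,
      gadget.card_transversal (by omega) i j g⟩
end

section
/- In the graph G_3^{μ,υ}(X) (tripartite on U, Y, W each of size n/3), the number of triangles equals (n/3) · |{(i,j) : μ_i = 1, υ_j = 1, X_{i,j} = 1}|. -/
open Function

section

variable {m : ℕ} {μ υ : Fin m → Bool} {X : Fin m → Fin m → Bool}

def gadgetTriangle (l i j : Fin m) : Finset (Fin m ⊕ Fin m ⊕ Fin (3 - 2) × Fin m) :=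
  {.inl i, .inr (.inl j), .inr (.inr (0, l))}

lemma gadgetTriangle_injective :
    Injective fun p : Fin m × Fin m × Fin m => gadgetTriangle p.1 p.2.1 p.2.2 := by
  rintro ⟨l, i, j⟩ ⟨l', i', j'⟩ h
  have hi := congrArg (Sum.inl i ∈ ·) h
  have hj := congrArg (Sum.inr (Sum.inl j) ∈ ·) h
  have hl := congrArg (Sum.inr (Sum.inr (0, l)) ∈ ·) h
  simp only [gadgetTriangle, Finset.mem_insert, Finset.mem_singleton, Sum.inl.injEq,
    Sum.inr.injEq, Prod.mk.injEq, reduceCtorEq, true_and, or_false, false_or, eq_iff_iff,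
    true_iff] at hi hj hl
  subst hi hj hl
  rfl

lemma gadget_three_isNClique_three_iff {S : Finset (Fin m ⊕ Fin m ⊕ Fin (3 - 2) × Fin m)} :
    (gadget 3 m μ υ X).IsNClique 3 S ↔
      ∃ l i j, (μ i = true ∧ υ j = true ∧ X i j = true) ∧ S = gadgetTriangle l i j := by
  constructor
  · -- Each part is independent (for `k = 3` the part `W` is indexed by `Fin 1`), so a
    -- triangle meets every part once.
    rw [SimpleGraph.is3Clique_iff]
    rintro ⟨a, b, c, hab, hac, hbc, rfl⟩
    rcases a with i | j | ⟨p, l⟩ <;> rcases b with i' | j' | ⟨p', l'⟩ <;>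
      rcases c with i'' | j'' | ⟨p'', l''⟩ <;>
      simp only [gadget, Fin.fin_one_eq_zero, ne_eq, not_true_eq_false] at hab hac hbc <;>
      first
      | contradiction
      | (first
          | refine ⟨l, _, _, ⟨‹_›, ‹_›, ‹_›⟩, ?_⟩
          | refine ⟨l', _, _, ⟨‹_›, ‹_›, ‹_›⟩, ?_⟩
          | refine ⟨l'', _, _, ⟨‹_›, ‹_›, ‹_›⟩, ?_⟩)
        ext x
        simp only [gadgetTriangle, Finset.mem_insert, Finset.mem_singleton,
          Fin.fin_one_eq_zero] <;> tauto
  · rintro ⟨l, i, j, ⟨hμ, hυ, hX⟩, rfl⟩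
    exact SimpleGraph.is3Clique_triple_iff.mpr ⟨hX, hμ, hυ⟩

end

/-- In the tripartite graph `G_3^{μ,υ}(X)` on parts `U`, `Y`, `W` of size `m = n/3`,
the number of triangles equals `m · |{(i,j) : μ_i = 1, υ_j = 1, X_{i,j} = 1}|`. -/
theorem stmt11 (m : ℕ) (μ υ : Fin m → Bool) (X : Fin m → Fin m → Bool) :
    Nat.card {S : Finset (Fin m ⊕ Fin m ⊕ Fin (3 - 2) × Fin m) //
        (gadget 3 m μ υ X).IsNClique 3 S} =
      m * Nat.card {ij : Fin m × Fin m //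
          μ ij.1 = true ∧ υ ij.2 = true ∧ X ij.1 ij.2 = true} := by
  let triangleOf : Fin m × {ij : Fin m × Fin m //
      μ ij.1 = true ∧ υ ij.2 = true ∧ X ij.1 ij.2 = true} →
      {S // (gadget 3 m μ υ X).IsNClique 3 S} := fun p =>
    ⟨gadgetTriangle p.1 p.2.1.1 p.2.1.2, gadget_three_isNClique_three_iff.mpr ⟨_, _, _, p.2.2, rfl⟩⟩
  have bijective : Bijective triangleOf := by
    refine ⟨?_, fun ⟨S, hS⟩ => ?_⟩
    · rintro ⟨l, ⟨i, j⟩, _⟩ ⟨l', ⟨i', j'⟩, _⟩ h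
      cases @gadgetTriangle_injective _ (l, i, j) (l', i', j') (congrArg Subtype.val h)
      rfl
    · obtain ⟨l, i, j, hij, rfl⟩ := gadget_three_isNClique_three_iff.mp hS
      exact ⟨(l, ⟨(i, j), hij⟩), rfl⟩
  rw [← Nat.card_congr (Equiv.ofBijective triangleOf bijective), Nat.card_prod, Nat.card_fin]
end

section
/- For the family of graphs G^x indexed by x ∈ {0,1}^{n/2}, the k-cycle count C_k(G^x) depends only on |x| (the Hamming weight of x), and for any x, x' with |x| ≥ |x'|, C_k(G^x) − C_k(G^{x'}) ≥ (|x| − |x'|)·𝖢_1, where 𝖢_1 is the number of k-cycles in G^x that use exactly one edge of the form {v_{2i−1}, v_{2i}} (a quantity independent of x as long as that edge is present). -/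
/-- The graph `G^x` on `n = 2m` vertices (vertex `(i, b)` stands for `v_{2i+1}` or
`v_{2i+2}`): every pair of distinct vertices is an edge, except the pairs
`{(i, false), (i, true)}`, which are edges iff `x_i = 1`. -/
def Gx (m : ℕ) (x : Fin m → Bool) : SimpleGraph (Fin m × Bool) where
  Adj a b := a ≠ b ∧ (a.1 = b.1 → x a.1 = true)
  symm := by
    constructor
    rintro a b ⟨h1, h2⟩
    refine ⟨h1.symm, fun h => ?_⟩
    rw [h]
    exact h2 h.symm
  loopless := by constructor; intro a h; exact h.1 rfl

/-- The number of `k`-cycle subgraphs of `G^x` that pass through the special edge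
`{(i, false), (i, true)}` and avoid every other special edge. -/
noncomputable def cyclesThrough (m k : ℕ) (x : Fin m → Bool) (i : Fin m) : ℕ :=
  Nat.card {H : (Gx m x).Subgraph //
    Nonempty (H.coe ≃g SimpleGraph.cycleGraph k) ∧ H.Adj (i, false) (i, true) ∧
      ∀ j, j ≠ i → ¬H.Adj (j, false) (j, true)}

/-- The number of `k`-cycle subgraphs of a graph `G`. -/
noncomputable def cycleCount (k : ℕ) {V : Type*} (G : SimpleGraph V) : ℕ :=
  Nat.card {H : G.Subgraph // Nonempty (H.coe ≃g SimpleGraph.cycleGraph k)}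

/-- The Hamming weight `|x|` of `x ∈ {0,1}^m`. -/
def hw {m : ℕ} (x : Fin m → Bool) : ℕ := (Finset.univ.filter fun i => x i = true).card

/-!
A permutation `σ` of the pairs gives an isomorphism `G^(x ∘ σ) ≃g G^x`, and isomorphic graphs
have the same number of `k`-cycle subgraphs; any two `x` of equal weight differ by such a `σ`.
A `k`-cycle of `G^x` through the special edge `i` and no other special edge is already a cycle of
`G^(δᵢ)`, `δᵢ` the indicator of `i`, so `𝖢₁` depends neither on `x` nor, by a transposition, on `i`.
Deleting a present special edge `j` loses at least the cycles through `j` alone, so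
`C_k(G^(x - eⱼ)) + 𝖢₁ ≤ C_k(G^x)`; deleting `|x| - |x'|` edges and using the first part
gives the inequality.
-/

namespace SimpleGraph

variable {V W : Type*} {G : SimpleGraph V} {G' : SimpleGraph W}

lemma Subgraph.map_injective_of_injective {f : G →g G'} (hf : Function.Injective f) :
    Function.Injective (Subgraph.map f) := by
  intro H₁ H₂ h
  ext a b
  · rw [(Set.image_injective.2 hf) (congrArg Subgraph.verts h)]
  · simpa only [Subgraph.map_adj, Relation.map_apply_apply hf hf] using
      Iff.of_eq (congrArg (fun H : G'.Subgraph => H.Adj (f a) (f b)) h)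

lemma Copy.nat_card_subgraph_le [Finite W] (f : Copy G G') {P : G.Subgraph → Prop}
    {Q : G'.Subgraph → Prop} (hPQ : ∀ H, P H → Q (H.map f.toHom)) :
    Nat.card {H // P H} ≤ Nat.card {H // Q H} :=
  Nat.card_le_card_of_injective (fun H => ⟨H.1.map f.toHom, hPQ _ H.2⟩) fun _ _ h =>
    Subtype.ext (Subgraph.map_injective_of_injective f.injective (congrArg Subtype.val h))

lemma Copy.nonempty_iso_map {U : Type*} {C : SimpleGraph U} (f : Copy G G') {H : G.Subgraph}
    (h : Nonempty (H.coe ≃g C)) : Nonempty ((H.map f.toHom).coe ≃g C) :=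
  h.map (f.isoSubgraphMap H).symm.trans

lemma Iso.cycleCount_eq [Finite V] [Finite W] (e : G ≃g G') (k : ℕ) :
    cycleCount k G = cycleCount k G' :=
  le_antisymm (e.toCopy.nat_card_subgraph_le fun _ => e.toCopy.nonempty_iso_map)
    (e.symm.toCopy.nat_card_subgraph_le fun _ => e.symm.toCopy.nonempty_iso_map)

def Subgraph.transfer {G₁ G₂ : SimpleGraph V} (H : G₁.Subgraph)
    (h : ∀ ⦃a b⦄, H.Adj a b → G₂.Adj a b) : G₂.Subgraph :=
  { H with adj_sub := fun hab => h hab }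

lemma Subgraph.transfer_inj {G₁ G₂ : SimpleGraph V} {H₁ H₂ : G₁.Subgraph}
    {h₁ : ∀ ⦃a b⦄, H₁.Adj a b → G₂.Adj a b} {h₂ : ∀ ⦃a b⦄, H₂.Adj a b → G₂.Adj a b} :
    H₁.transfer h₁ = H₂.transfer h₂ ↔ H₁ = H₂ := by
  constructor
  · intro h
    exact Subgraph.ext (congrArg (fun H : G₂.Subgraph => H.verts) h)
      (congrArg (fun H : G₂.Subgraph => H.Adj) h)
  · rintro rfl
    rfl

end SimpleGraph

open SimpleGraph

namespace Gx

variable {m k : ℕ}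

lemma mono {x y : Fin m → Bool} (h : ∀ j, y j = true → x j = true) : Gx m y ≤ Gx m x :=
  fun _ _ hab => ⟨hab.1, fun hc => h _ (hab.2 hc)⟩

lemma adj_of_subgraph_adj {x : Fin m → Bool} {H : (Gx m x).Subgraph} {a b : Fin m × Bool}
    (hab : H.Adj a b) (h : a.1 = b.1) : H.Adj (a.1, false) (a.1, true) := by
  obtain ⟨p, c⟩ := a
  obtain ⟨q, d⟩ := b
  obtain rfl : p = q := h
  have hne := (H.adj_sub hab).1
  cases c <;> cases d
  · exact absurd rfl hne
  · exact hab
  · exact hab.symm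
  · exact absurd rfl hne

def permIso (x : Fin m → Bool) (σ : Equiv.Perm (Fin m)) : Gx m (x ∘ σ) ≃g Gx m x where
  toEquiv := σ.prodCongr (Equiv.refl Bool)
  map_rel_iff' := by
    rintro ⟨p, c⟩ ⟨q, d⟩
    simp [Gx, Prod.ext_iff, σ.injective.eq_iff]

lemma exists_perm_of_hw_eq {x x' : Fin m → Bool} (h : hw x' = hw x) :
    ∃ σ : Equiv.Perm (Fin m), x' = x ∘ σ := by
  obtain ⟨σ, hσ⟩ := Equiv.Perm.exists_map_finset_eq _ _ h
  refine ⟨σ, funext fun j => Bool.eq_iff_iff.2 ?_⟩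
  simpa using congrArg (σ j ∈ ·) hσ

lemma cycleCount_eq_of_hw_eq {x x' : Fin m → Bool} (h : hw x = hw x') :
    cycleCount k (Gx m x) = cycleCount k (Gx m x') := by
  obtain ⟨σ, rfl⟩ := exists_perm_of_hw_eq h
  exact (permIso x' σ).cycleCount_eq k

lemma cyclesThrough_comp_perm_le (x : Fin m → Bool) (σ : Equiv.Perm (Fin m)) (i : Fin m) :
    cyclesThrough m k (x ∘ σ) i ≤ cyclesThrough m k x (σ i) := by
  refine (permIso x σ).toCopy.nat_card_subgraph_le fun H ⟨hC, hi, hj⟩ =>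
    ⟨(permIso x σ).toCopy.nonempty_iso_map hC, ⟨_, _, hi, rfl, rfl⟩, ?_⟩
  rintro j hji ⟨⟨p, c⟩, ⟨q, d⟩, hpq, hp, hq⟩
  change (σ p, c) = (j, false) at hp
  change (σ q, d) = (j, true) at hq
  simp only [Prod.mk.injEq] at hp hq
  obtain ⟨rfl, rfl⟩ := hp
  obtain ⟨hq, rfl⟩ := hq
  obtain rfl := σ.injective hq
  exact hj _ (fun h => hji (congrArg σ h)) hpq

lemma cyclesThrough_eq_single {x : Fin m → Bool} {i : Fin m} (hi : x i = true) :
    cyclesThrough m k x i = cyclesThrough m k (fun j => decide (j = i)) i := by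
  have hle : Gx m (fun j => decide (j = i)) ≤ Gx m x := mono fun j hj => by
    rwa [of_decide_eq_true hj]
  refine Nat.card_congr
    { toFun := fun H => ⟨H.1.transfer fun a b hab => ⟨(H.1.adj_sub hab).1, fun hab₁ =>
          decide_eq_true (by_contra fun hne => H.2.2.2 _ hne (adj_of_subgraph_adj hab hab₁))⟩,
        H.2⟩
      invFun := fun H => ⟨H.1.transfer fun _ _ hab => hle (H.1.adj_sub hab), H.2⟩
      left_inv := fun _ => rfl
      right_inv := fun _ => rfl }

lemma cyclesThrough_eq {x x' : Fin m → Bool} {i i' : Fin m} (hi : x i = true)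
    (hi' : x' i' = true) : cyclesThrough m k x i = cyclesThrough m k x' i' := by
  have key : ∀ i i' : Fin m, cyclesThrough m k (fun j => decide (j = i')) i' ≤
      cyclesThrough m k (fun j => decide (j = i)) i := by
    intro i i'
    have hswap : (fun j => decide (j = i)) ∘ Equiv.swap i i' = fun j => decide (j = i') := by
      funext j
      simp [Equiv.swap_apply_eq_iff]
    have := cyclesThrough_comp_perm_le (k := k) (fun j => decide (j = i)) (Equiv.swap i i') i'
    rwa [hswap, Equiv.swap_apply_right] at this
  rw [cyclesThrough_eq_single hi, cyclesThrough_eq_single hi']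
  exact le_antisymm (key i' i) (key i i')

lemma cycleCount_update_add_cyclesThrough_le {x : Fin m → Bool} {j : Fin m} (hj : x j = true) :
    cycleCount k (Gx m (Function.update x j false)) + cyclesThrough m k x j ≤
      cycleCount k (Gx m x) := by
  have hle : Gx m (Function.update x j false) ≤ Gx m x := mono fun p hp => by
    rcases eq_or_ne p j with rfl | hne
    · exact hj
    · rwa [Function.update_of_ne hne] at hp
  rw [cycleCount, cycleCount, cyclesThrough, ← Nat.card_sum]
  refine Nat.card_le_card_of_injective
    (Sum.elim (fun H => ⟨H.1.transfer fun _ _ hab => hle (H.1.adj_sub hab), H.2⟩)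
      (fun H => ⟨H.1, H.2.1⟩)) ?_
  refine Function.Injective.sumElim
    (fun _ _ h => Subtype.ext (Subgraph.transfer_inj.1 (Subtype.mk.inj h)))
    (fun _ _ h => Subtype.ext (Subtype.mk.inj h)) ?_
  rintro H₁ H₂ h
  have hadj : (Gx m (Function.update x j false)).Adj (j, false) (j, true) := by
    refine H₁.1.adj_sub ?_
    have := H₂.2.2.1
    rwa [← Subtype.mk.inj h] at this
  simpa using hadj.2 rfl

lemma hw_update_false_add_one {x : Fin m → Bool} {j : Fin m} (hj : x j = true) :
    hw (Function.update x j false) + 1 = hw x := by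
  have hfilter : Finset.univ.filter (fun i => Function.update x j false i = true) =
      (Finset.univ.filter fun i => x i = true).erase j := by
    ext i
    rcases eq_or_ne i j with rfl | hne <;> simp [*]
  rw [hw, hw, hfilter, Finset.card_erase_add_one (by simpa using hj)]

lemma cycleCount_add_mul_le {c : ℕ}
    (hc : ∀ (y : Fin m → Bool) (j : Fin m), y j = true → cyclesThrough m k y j = c)
    {d : ℕ} {x x' : Fin m → Bool} (h : hw x' + d = hw x) :
    cycleCount k (Gx m x') + d * c ≤ cycleCount k (Gx m x) := by
  induction d generalizing x with
  | zero => simpa using (cycleCount_eq_of_hw_eq h.symm).ge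
  | succ d ih =>
    obtain ⟨j, hj⟩ : ∃ j, x j = true := by
      have : 0 < hw x := by omega
      simpa [hw, Finset.card_pos, Finset.filter_nonempty_iff] using this
    have hy := hw_update_false_add_one hj
    calc cycleCount k (Gx m x') + (d + 1) * c
        = cycleCount k (Gx m x') + d * c + cyclesThrough m k x j := by rw [hc x j hj]; ring
      _ ≤ cycleCount k (Gx m (Function.update x j false)) + cyclesThrough m k x j := by
        gcongr
        exact ih (by omega)
      _ ≤ cycleCount k (Gx m x) := cycleCount_update_add_cyclesThrough_le hj

end Gx

theorem stmt14_general (m k : ℕ) :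
    (∀ x x' : Fin m → Bool, hw x = hw x' →
        cycleCount k (Gx m x) = cycleCount k (Gx m x')) ∧
    (∀ (x x' : Fin m → Bool) (i i' : Fin m), x i = true → x' i' = true →
        cyclesThrough m k x i = cyclesThrough m k x' i') ∧
    (∀ (x x' : Fin m → Bool) (i : Fin m), x i = true → hw x' ≤ hw x →
        cycleCount k (Gx m x') + (hw x - hw x') * cyclesThrough m k x i ≤
          cycleCount k (Gx m x)) :=
  ⟨fun _ _ => Gx.cycleCount_eq_of_hw_eq, fun _ _ _ _ => Gx.cyclesThrough_eq,
    fun _ _ _ hi hle => Gx.cycleCount_add_mul_le (fun _ _ hj => Gx.cyclesThrough_eq hj hi)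
      (Nat.add_sub_of_le hle)⟩

/-- The `k`-cycle count of `G^x` depends only on the Hamming weight `|x|`; the number
`𝖢₁` of `k`-cycles through one fixed present special edge and no other special edge is
independent of `x` and of the chosen edge; and for `|x| ≥ |x'|`,
`C_k(G^x) − C_k(G^{x'}) ≥ (|x| − |x'|)·𝖢₁`. -/
theorem stmt14 (m k : ℕ) (hk : 3 ≤ k) :
    (∀ x x' : Fin m → Bool, hw x = hw x' →
        cycleCount k (Gx m x) = cycleCount k (Gx m x')) ∧
    (∀ (x x' : Fin m → Bool) (i i' : Fin m), x i = true → x' i' = true →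
        cyclesThrough m k x i = cyclesThrough m k x' i') ∧
    (∀ (x x' : Fin m → Bool) (i : Fin m), x i = true → hw x' ≤ hw x →
        cycleCount k (Gx m x') + (hw x - hw x') * cyclesThrough m k x i ≤
          cycleCount k (Gx m x)) :=
  stmt14_general m k
end

section
/- Suppose an estimator A of C_k(G^x) has expected absolute error o(n^{k−1.5}), and define B(x) to be the value q minimizing |f(q) − A|, where f(q) = C_k(G^0) + Σ_{p=1}^{q} C(q,p)·𝖢_p is strictly increasing in q with increments f(q+1) − f(q) ≥ 𝖢_1 ≥ c·n^{k−2} for some constant c > 0. Then the expected error |B(x) − |x|| is o(√n). -/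
open MeasureTheory Filter Asymptotics

lemma gap_lemma (g : ℕ → ℝ) (d : ℝ) (hg : ∀ q, d ≤ g (q+1) - g q) :
    ∀ a b : ℕ, a ≤ b → d * ((b : ℝ) - a) ≤ g b - g a := by
  intro a b hab
  induction b, hab using Nat.le_induction with
  | base => simp
  | succ m hm ih =>
      have := hg m
      push_cast
      nlinarith [ih]

/-- Suppose for each `n` an estimator `A n` of `f n (q₀ n)` has expected absolute error
`o(n^{k−1.5})`, where `f n` has increments `f n (q+1) − f n q ≥ c·n^{k−2}` for a constant
`c > 0`, and `B n ω` is a (measurable choice of) minimizer of `q ↦ |f n q − A n ω|`.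
Then the expected error `E|B − q₀|` is `o(√n)`. -/
theorem stmt15 (k : ℕ) (hk : 2 ≤ k) (c : ℝ) (hc : 0 < c)
    (Ω : ℕ → Type*) [∀ n, MeasurableSpace (Ω n)]
    (μ : ∀ n, Measure (Ω n)) [∀ n, IsProbabilityMeasure (μ n)]
    (f : ℕ → ℕ → ℝ)
    (hf : ∀ (n q : ℕ), c * (n : ℝ) ^ (k - 2) ≤ f n (q + 1) - f n q)
    (A : ∀ n, Ω n → ℝ) (q0 : ℕ → ℕ)
    (hAint : ∀ n, Integrable (fun ω => |A n ω - f n (q0 n)|) (μ n))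
    (herr : (fun n => ∫ ω, |A n ω - f n (q0 n)| ∂μ n)
        =o[atTop] fun n => (n : ℝ) ^ ((k : ℝ) - 1.5))
    (B : ∀ n, Ω n → ℕ)
    (hB : ∀ n ω q, |f n (B n ω) - A n ω| ≤ |f n q - A n ω|)
    (hBint : ∀ n, Integrable (fun ω => |(B n ω : ℝ) - (q0 n : ℝ)|) (μ n)) :
    (fun n => ∫ ω, |(B n ω : ℝ) - (q0 n : ℝ)| ∂μ n)
      =o[atTop] fun n => Real.sqrt n := by
  -- pointwise bound
  have key : ∀ n : ℕ, 1 ≤ n → ∀ ω,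
      |(B n ω : ℝ) - (q0 n : ℝ)| ≤ (2 / (c * (n:ℝ)^(k-2))) * |A n ω - f n (q0 n)| := by
    intro n hn ω
    set d := c * (n:ℝ)^(k-2) with hd
    have hdpos : 0 < d := by positivity
    have habs : d * |(B n ω : ℝ) - (q0 n : ℝ)| ≤ |f n (B n ω) - f n (q0 n)| := by
      rcases le_total (B n ω) (q0 n) with h | h
      · have hg := gap_lemma (f n) d (fun q => hf n q) _ _ h
        have hle : (B n ω : ℝ) ≤ (q0 n : ℝ) := by exact_mod_cast h
        have h1 : 0 ≤ (q0 n : ℝ) - (B n ω : ℝ) := by linarith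
        have h2 : 0 ≤ f n (q0 n) - f n (B n ω) := le_trans (by positivity) hg
        rw [abs_sub_comm ((B n ω : ℝ)), abs_sub_comm (f n (B n ω)),
          abs_of_nonneg h1, abs_of_nonneg h2]
        exact hg
      · have hg := gap_lemma (f n) d (fun q => hf n q) _ _ h
        have hle : (q0 n : ℝ) ≤ (B n ω : ℝ) := by exact_mod_cast h
        have h1 : 0 ≤ (B n ω : ℝ) - (q0 n : ℝ) := by linarith
        have h2 : 0 ≤ f n (B n ω) - f n (q0 n) := le_trans (by positivity) hg
        rw [abs_of_nonneg h1, abs_of_nonneg h2]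
        exact hg
    have h2 : |f n (B n ω) - f n (q0 n)| ≤ 2 * |A n ω - f n (q0 n)| := by
      have h1 := hB n ω (q0 n)
      calc |f n (B n ω) - f n (q0 n)|
          ≤ |f n (B n ω) - A n ω| + |A n ω - f n (q0 n)| := abs_sub_le _ _ _
        _ ≤ |f n (q0 n) - A n ω| + |A n ω - f n (q0 n)| := by linarith
        _ = 2 * |A n ω - f n (q0 n)| := by rw [abs_sub_comm]; ring
    rw [div_mul_eq_mul_div, le_div_iff₀ hdpos]
    nlinarith [abs_nonneg ((B n ω : ℝ) - (q0 n : ℝ))]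
  -- integral bound
  have ibound : ∀ n : ℕ, 1 ≤ n →
      (∫ ω, |(B n ω : ℝ) - (q0 n : ℝ)| ∂μ n)
        ≤ (2 / (c * (n:ℝ)^(k-2))) * ∫ ω, |A n ω - f n (q0 n)| ∂μ n := by
    intro n hn
    rw [← integral_const_mul]
    exact integral_mono (hBint n) ((hAint n).const_mul _) (key n hn)
  -- big-O step
  have hO : (fun n => ∫ ω, |(B n ω : ℝ) - (q0 n : ℝ)| ∂μ n)
      =O[atTop] fun n => (∫ ω, |A n ω - f n (q0 n)| ∂μ n) * ((n:ℝ)^(k-2))⁻¹ := by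
    apply IsBigO.of_bound (2 / c)
    filter_upwards [eventually_ge_atTop 1] with n hn
    have hInn : 0 ≤ ∫ ω, |(B n ω : ℝ) - (q0 n : ℝ)| ∂μ n :=
      integral_nonneg fun ω => abs_nonneg _
    have hIA : 0 ≤ ∫ ω, |A n ω - f n (q0 n)| ∂μ n :=
      integral_nonneg fun ω => abs_nonneg _
    have hnp : (0:ℝ) < (n:ℝ)^(k-2) := by positivity
    rw [Real.norm_of_nonneg hInn, Real.norm_of_nonneg (by positivity)]
    calc (∫ ω, |(B n ω : ℝ) - (q0 n : ℝ)| ∂μ n)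
        ≤ (2 / (c * (n:ℝ)^(k-2))) * ∫ ω, |A n ω - f n (q0 n)| ∂μ n := ibound n hn
      _ = 2 / c * ((∫ ω, |A n ω - f n (q0 n)| ∂μ n) * ((n:ℝ)^(k-2))⁻¹) := by
          field_simp
  -- little-o of rhs
  have ho : (fun n => (∫ ω, |A n ω - f n (q0 n)| ∂μ n) * ((n:ℝ)^(k-2))⁻¹)
      =o[atTop] fun n => Real.sqrt n := by
    have h1 := herr.mul_isBigO (isBigO_refl (fun n : ℕ => ((n:ℝ)^(k-2))⁻¹) atTop)
    refine h1.trans_isBigO (IsBigO.of_bound 1 ?_)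
    filter_upwards [eventually_ge_atTop 1] with n hn
    have hn0 : (0:ℝ) < n := by exact_mod_cast hn
    have heq : (n:ℝ) ^ ((k:ℝ) - 1.5) * ((n:ℝ)^(k-2))⁻¹ = Real.sqrt n := by
      rw [← Real.rpow_natCast (n:ℝ) (k-2), ← Real.rpow_neg hn0.le,
        ← Real.rpow_add hn0, Real.sqrt_eq_rpow]
      congr 1
      have : ((k - 2 : ℕ) : ℝ) = (k:ℝ) - 2 := by
        push_cast [Nat.cast_sub hk]; ring
      rw [this]; norm_num
    rw [heq, one_mul]
  exact hO.trans_isLittleO ho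
end
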